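/- With a₁^±, a₂^±, a₃^± defined from f^±, b^± as above, the Hamiltonian Σₖ₌₁³ {aₖ⁺, aₖ⁻} equals {b⁺, b⁻} (as 5×5 matrices). -/

import Mathlib

open Matrix Complex

noncomputable section

abbrev M5 := Matrix (Fin 5) (Fin 5) ℂ

def E (i j : Fin 5) : M5 := Matrix.single i j 1

def fp : M5 := (Real.sqrt 2 : ℂ) • (E 0 2 - E 2 1)
def fm : M5 := (Real.sqrt 2 : ℂ) • (E 2 0 - E 1 2)
def bp : M5 := (Real.sqrt 2 : ℂ) • (E 2 4 + E 3 2)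
def bm : M5 := (Real.sqrt 2 : ℂ) • (E 2 3 - E 4 2)

def lb (A B : M5) : M5 := A * B - B * A
def ab (A B : M5) : M5 := A * B + B * A

def s3 : ℂ := (Real.sqrt 3 : ℂ)

def aP : Fin 3 → M5 :=
  ![ (1/(2*s3)) • lb (fm - fp) bp,
     (Complex.I/(2*s3)) • lb (fm + fp) bp,
     (1/s3) • bp ]

def aM : Fin 3 → M5 :=
  ![ (1/(2*s3)) • lb (fm - fp) bm,
     (Complex.I/(2*s3)) • lb (fm + fp) bm,
     (1/s3) • bm ]

/-! With 0-based indices, `{b⁺, b⁻} = 2 (E 3 3 - E 4 4)`, and each of the three modes contributes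
exactly a third of it. The commutators `[f⁻ ∓ f⁺, b^±]` are twice integer combinations of matrix
units (the two factors `√2` multiply to `2`), whose anticommutators are `±2 (E 3 3 - E 4 4)`; the
`1/√3` prefactors give the `1/3`, and in the second mode the sign is cancelled by `i² = -1`. -/

lemma E_mul_E (i j k l : Fin 5) : E i j * E k l = if j = k then E i l else 0 := by
  split_ifs with h
  · subst h
    simp [E]
  · simp [E, h]

lemma ofReal_sqrt_mul_self {x : ℝ} (hx : 0 ≤ x) : (√x : ℂ) * √x = x := by
  exact_mod_cast Real.mul_self_sqrt hx

lemma s3_mul_self : s3 * s3 = 3 := by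
  simpa [s3] using ofReal_sqrt_mul_self (x := 3) (by norm_num)

lemma ab_smul_smul (c d : ℂ) (A B : M5) : ab (c • A) (d • B) = (c * d) • ab A B := by
  simp only [ab, smul_mul_smul_comm, smul_add]
  rw [mul_comm d c]

lemma aP_zero_eq : aP 0 = (1 / s3) • (-E 0 4 - E 1 4 - E 3 0 - E 3 1) := by
  simp only [aP, cons_val_zero, lb, fm, fp, bp, smul_sub, smul_add, smul_mul_smul_comm,
    sub_mul, mul_sub, add_mul, mul_add, E_mul_E]
  simp +decide only [ofReal_sqrt_mul_self zero_le_two, reduceIte]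
  module

lemma aM_zero_eq : aM 0 = (1 / s3) • (-E 0 3 - E 1 3 + E 4 0 + E 4 1) := by
  simp only [aM, cons_val_zero, lb, fm, fp, bm, smul_sub, smul_add, smul_mul_smul_comm,
    sub_mul, mul_sub, add_mul, mul_add, E_mul_E]
  simp +decide only [ofReal_sqrt_mul_self zero_le_two, reduceIte]
  module

lemma aP_one_eq : aP 1 = (I / s3) • (E 0 4 - E 1 4 - E 3 0 + E 3 1) := by
  simp only [aP, cons_val_one, cons_val_zero, lb, fm, fp, bp, smul_sub, smul_add,
    smul_mul_smul_comm, sub_mul, mul_sub, add_mul, mul_add, E_mul_E]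
  simp +decide only [ofReal_sqrt_mul_self zero_le_two, reduceIte]
  module

lemma aM_one_eq : aM 1 = (I / s3) • (E 0 3 - E 1 3 + E 4 0 - E 4 1) := by
  simp only [aM, cons_val_one, cons_val_zero, lb, fm, fp, bm, smul_sub, smul_add,
    smul_mul_smul_comm, sub_mul, mul_sub, add_mul, mul_add, E_mul_E]
  simp +decide only [ofReal_sqrt_mul_self zero_le_two, reduceIte]
  module

lemma ab_bp_bm : ab bp bm = (2 : ℂ) • (E 3 3 - E 4 4) := by
  simp only [ab, bp, bm, smul_sub, smul_add, smul_mul_smul_comm,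
    sub_mul, mul_sub, add_mul, mul_add, E_mul_E]
  simp +decide only [ofReal_sqrt_mul_self zero_le_two, reduceIte]
  module

lemma ab_aP_aM (k : Fin 3) : ab (aP k) (aM k) = (1 / 3 : ℂ) • ab bp bm := by
  fin_cases k
  · have h : ab (-E 0 4 - E 1 4 - E 3 0 - E 3 1) (-E 0 3 - E 1 3 + E 4 0 + E 4 1) =
        (2 : ℂ) • (E 3 3 - E 4 4) := by
      simp only [ab, sub_mul, mul_sub, add_mul, mul_add, neg_mul, mul_neg, E_mul_E]
      simp +decide only [reduceIte]
      module
    rw [Fin.zero_eta, aP_zero_eq, aM_zero_eq, ab_smul_smul, div_mul_div_comm, s3_mul_self, h,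
      ab_bp_bm, one_mul]
  · have h : ab (E 0 4 - E 1 4 - E 3 0 + E 3 1) (E 0 3 - E 1 3 + E 4 0 - E 4 1) =
        -(2 : ℂ) • (E 3 3 - E 4 4) := by
      simp only [ab, sub_mul, mul_sub, add_mul, mul_add, E_mul_E]
      simp +decide only [reduceIte]
      module
    rw [Fin.mk_one, aP_one_eq, aM_one_eq, ab_smul_smul, div_mul_div_comm, s3_mul_self, I_mul_I, h,
      ab_bp_bm, smul_smul, smul_smul]
    norm_num
  · change ab ((1 / s3) • bp) ((1 / s3) • bm) = _
    rw [ab_smul_smul, div_mul_div_comm, s3_mul_self, one_mul]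

/-- The Hamiltonian Σₖ {aₖ⁺, aₖ⁻} equals {b⁺, b⁻}. -/
theorem hamiltonian_eq :
    (∑ k : Fin 3, ab (aP k) (aM k)) = ab bp bm := by
  simp only [ab_aP_aM, Finset.sum_const, Finset.card_univ, Fintype.card_fin]
  module
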